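/- Let n ≥ 1 be an integer, M > 0, and let φ : ℝⁿ → ℝ satisfy |φ(x)−φ(y)| ≤ M|x−y| for all x,y ∈ ℝⁿ. Let x₀ ∈ ℝⁿ and set Q₀ = (φ(x₀), x₀) ∈ ∂Ω_φ. Then for every β ∈ (0,1] and every c > 0, and for every point (t,x) ∈ Γ^{β,c}_{Ω_φ}(Q₀), setting σ = t − φ(x) (so σ > 0), one has (σ, x) ∈ Γ^β_{1+c}(x₀); that is, |x − x₀| < (1+c)·σ^β if 0 < σ ≤ 1, and |x − x₀| < (1+c)·σ if σ ≥ 1. Equivalently, Γ^{β,c}_{Ω_φ}(Q₀) ⊆ F_φ^{-1}( Γ^β_{1+c}(x₀) ), where F_φ(t,x) = (t − φ(x), x). -/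

import Mathlib

open MeasureTheory Metric Set
open scoped ENNReal NNReal

/-- `ℝ^{1+n} = ℝ × ℝⁿ` with the Euclidean (L²) norm. -/
noncomputable abbrev UHS (n : ℕ) := WithLp 2 (ℝ × EuclideanSpace ℝ (Fin n))

noncomputable def mkH (n : ℕ) (t : ℝ) (x : EuclideanSpace ℝ (Fin n)) : UHS n :=
  (WithLp.equiv 2 (ℝ × EuclideanSpace ℝ (Fin n))).symm (t, x)

noncomputable def fstH {n : ℕ} (X : UHS n) : ℝ :=
  ((WithLp.equiv 2 (ℝ × EuclideanSpace ℝ (Fin n))) X).1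

noncomputable def sndH {n : ℕ} (X : UHS n) : EuclideanSpace ℝ (Fin n) :=
  ((WithLp.equiv 2 (ℝ × EuclideanSpace ℝ (Fin n))) X).2

/-- The special Lipschitz domain `Ω_φ = {(t,x) : t > φ(x)}`. -/
def specialDomain (n : ℕ) (φ : EuclideanSpace ℝ (Fin n) → ℝ) : Set (UHS n) :=
  {X | φ (sndH X) < fstH X}

/-- The tangential approach region `Γ^{β,c}_Ω(X₀)`. -/
noncomputable def tangRegion {E : Type*} [NormedAddCommGroup E]
    (Ω : Set E) (X₀ : E) (β c : ℝ) : Set E :=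
  {X | X ∈ Ω ∧
    (Metric.infDist X (frontier Ω) ≤ 1 →
      dist X X₀ < (1 + c) * Metric.infDist X (frontier Ω) ^ β) ∧
    (1 ≤ Metric.infDist X (frontier Ω) →
      dist X X₀ < (1 + c) * Metric.infDist X (frontier Ω))}

/-- The tangential approach region `Γ^β_a(x₀)` in the upper half-space
`(0,∞) × ℝⁿ`. -/
noncomputable def upperRegion (n : ℕ) (β a : ℝ) (x₀ : EuclideanSpace ℝ (Fin n)) :
    Set (ℝ × EuclideanSpace ℝ (Fin n)) :=
  {tx | 0 < tx.1 ∧ (tx.1 ≤ 1 → ‖tx.2 - x₀‖ < a * tx.1 ^ β) ∧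
    (1 ≤ tx.1 → ‖tx.2 - x₀‖ < a * tx.1)}

/-! The vertical projection `(φ(x), x)` of `X = (t, x) ∈ Ω_φ` lies on `∂Ω_φ` at distance
`σ = t - φ(x)` from `X`, so `dist(X, ∂Ω_φ) ≤ σ`. The bounds defining `Γ^{β,c}` are monotone in
the distance to the boundary, hence hold with `σ` in its place, and `|x - x₀| ≤ |X - Q₀|`. -/

@[simp]
lemma sndH_mkH (n : ℕ) (t : ℝ) (x : EuclideanSpace ℝ (Fin n)) : sndH (mkH n t x) = x := rfl

lemma dist_sndH_le {n : ℕ} (X Y : UHS n) : dist (sndH X) (sndH Y) ≤ dist X Y :=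
  WithLp.dist_snd_le X Y

lemma dist_mkH_mkH_same_snd (n : ℕ) (s t : ℝ) (x : EuclideanSpace ℝ (Fin n)) :
    dist (mkH n s x) (mkH n t x) = dist s t := by
  rw [WithLp.prod_dist_eq_of_L2]
  simp [mkH, Real.sqrt_sq_eq_abs, Real.dist_eq]

lemma mkH_mem_frontier_specialDomain {n : ℕ} (φ : EuclideanSpace ℝ (Fin n) → ℝ)
    (x : EuclideanSpace ℝ (Fin n)) : mkH n (φ x) x ∈ frontier (specialDomain n φ) := by
  refine ⟨Metric.mem_closure_iff.2 fun ε hε => ⟨mkH n (φ x + ε / 2) x, ?_, ?_⟩, ?_⟩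
  · show φ x < φ x + ε / 2
    linarith
  · rw [dist_mkH_mkH_same_snd, Real.dist_eq, abs_of_neg (by linarith)]
    linarith
  · intro h
    have hmem : mkH n (φ x) x ∈ specialDomain n φ := interior_subset h
    exact lt_irrefl (φ x) hmem

lemma infDist_frontier_specialDomain_le {n : ℕ} (φ : EuclideanSpace ℝ (Fin n) → ℝ)
    (X : UHS n) : infDist X (frontier (specialDomain n φ)) ≤ dist (fstH X) (φ (sndH X)) :=
  calc infDist X (frontier (specialDomain n φ))
      ≤ dist (mkH n (fstH X) (sndH X)) (mkH n (φ (sndH X)) (sndH X)) :=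
        infDist_le_dist_of_mem (mkH_mem_frontier_specialDomain φ (sndH X))
    _ = dist (fstH X) (φ (sndH X)) := dist_mkH_mkH_same_snd n _ _ _

lemma dist_lt_of_mem_tangRegion {E : Type*} [NormedAddCommGroup E] {Ω : Set E} {X₀ X : E}
    {β c r : ℝ} (hX : X ∈ tangRegion Ω X₀ β c) (hβ : 0 ≤ β) (hc : 0 ≤ 1 + c)
    (hr : infDist X (frontier Ω) ≤ r) :
    (r ≤ 1 → dist X X₀ < (1 + c) * r ^ β) ∧ (1 ≤ r → dist X X₀ < (1 + c) * r) := by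
  obtain ⟨-, hnear, hfar⟩ := hX
  have hd : 0 ≤ infDist X (frontier Ω) := infDist_nonneg
  refine ⟨fun hr1 => ?_, fun hr1 => ?_⟩
  · calc dist X X₀ < (1 + c) * infDist X (frontier Ω) ^ β := hnear (hr.trans hr1)
      _ ≤ (1 + c) * r ^ β := by gcongr
  · rcases le_total (infDist X (frontier Ω)) 1 with hd1 | hd1
    · calc dist X X₀ < (1 + c) * infDist X (frontier Ω) ^ β := hnear hd1
        _ ≤ (1 + c) * 1 := by gcongr; exact Real.rpow_le_one hd hd1 hβ
        _ ≤ (1 + c) * r := by gcongr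
    · calc dist X X₀ < (1 + c) * infDist X (frontier Ω) := hfar hd1
        _ ≤ (1 + c) * r := by gcongr

theorem statement18_general (n : ℕ)
    (φ : EuclideanSpace ℝ (Fin n) → ℝ)
    (x₀ : EuclideanSpace ℝ (Fin n)) (β c : ℝ) (hβ : 0 < β) (hc : 0 < c) :
    ∀ X ∈ tangRegion (specialDomain n φ) (mkH n (φ x₀) x₀) β c,
      0 < fstH X - φ (sndH X) ∧
      (fstH X - φ (sndH X), sndH X) ∈ upperRegion n β (1 + c) x₀ := by
  intro X hX
  have hσ : 0 < fstH X - φ (sndH X) := sub_pos.2 hX.1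
  have hσ_dist : infDist X (frontier (specialDomain n φ)) ≤ fstH X - φ (sndH X) := by
    simpa only [Real.dist_eq, abs_of_pos hσ] using infDist_frontier_specialDomain_le φ X
  obtain ⟨hnear, hfar⟩ := dist_lt_of_mem_tangRegion hX hβ.le (by linarith) hσ_dist
  have hx : ‖sndH X - x₀‖ ≤ dist X (mkH n (φ x₀) x₀) := by
    simpa only [sndH_mkH, dist_eq_norm (sndH X) x₀] using dist_sndH_le X (mkH n (φ x₀) x₀)
  exact ⟨hσ, hσ, fun h => hx.trans_lt (hnear h), fun h => hx.trans_lt (hfar h)⟩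

theorem statement18 (n : ℕ) (hn : 1 ≤ n) (M : ℝ) (hM : 0 < M)
    (φ : EuclideanSpace ℝ (Fin n) → ℝ)
    (hφ : ∀ x y : EuclideanSpace ℝ (Fin n), |φ x - φ y| ≤ M * ‖x - y‖)
    (x₀ : EuclideanSpace ℝ (Fin n)) (β c : ℝ) (hβ : 0 < β) (hβ1 : β ≤ 1) (hc : 0 < c) :
    ∀ X ∈ tangRegion (specialDomain n φ) (mkH n (φ x₀) x₀) β c,
      0 < fstH X - φ (sndH X) ∧
      (fstH X - φ (sndH X), sndH X) ∈ upperRegion n β (1 + c) x₀ :=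
  statement18_general n φ x₀ β c hβ hc
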